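/- Let m ≥ 2 be an integer, let n > 10 be an integer with n ≡ 2 (mod 4), and let a be the smallest divisor of n that is greater than 2. Then (1 + α(m))·( ((n/a)!)^a·a!/2 )^m ≤ (1/2^{m−1})·((n/2 − 1)!)²·((n/2)!)^{2m−2}, as an inequality of real numbers. -/

import Mathlib

/-- `alpha m` = α(m): the number of distinct prime divisors of `m`. -/
def alpha (m : ℕ) : ℕ := m.primeFactors.card

/-!
Write `n = a b`. Minimality forces `a` to be odd (else `a / 2` would be a smaller divisor
exceeding `2`), so `b = 2 d` with `d` odd, and `n / 2 = a d`. The heart of the matter is the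
factorial inequality `(b!)^a a! ≤ 2 ((a d - 1)!)^2`, proved for `d = 1` by induction on `a ≥ 7`
and for `d ≥ 3` by induction on `a ≥ 3` (the base case `a = 3` by induction on `d`).
With `X = (b!)^a a! / 2` this gives `X ≤ ((n/2 - 1)!)^2` and `4 X ≤ ((n/2)!)^2`; together with
`1 + α(m) ≤ m ≤ 2^(m-1)` this yields the bound, as `4^(m-1) X^m = X (4X)^(m-1)`.
-/

open Nat

lemma one_add_alpha_le {m : ℕ} (hm : 1 ≤ m) : 1 + alpha m ≤ m := by
  have hsub : m.primeFactors ⊆ Finset.Icc 2 m := fun p hp =>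
    Finset.mem_Icc.2 ⟨(prime_of_mem_primeFactors hp).two_le, le_of_mem_primeFactors hp⟩
  have := Finset.card_le_card hsub
  rw [Nat.card_Icc] at this
  unfold alpha
  omega

lemma one_add_alpha_le_two_pow {m : ℕ} (hm : 1 ≤ m) : 1 + alpha m ≤ 2 ^ (m - 1) := by
  have := Nat.lt_two_pow_self (n := m - 1)
  have := one_add_alpha_le hm
  omega

lemma two_pow_mul_succ_le_factorial {k : ℕ} (hk : 6 ≤ k) : 2 ^ k * (k + 1) ≤ k ! := by
  induction k, hk using Nat.le_induction with
  | base => decide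
  | succ k hk ih =>
    calc 2 ^ (k + 1) * (k + 1 + 1) = 2 ^ k * (2 * (k + 2)) := by ring
      _ ≤ 2 ^ k * ((k + 1) * (k + 1)) := Nat.mul_le_mul_left _ (by nlinarith)
      _ = 2 ^ k * (k + 1) * (k + 1) := by ring
      _ ≤ k ! * (k + 1) := Nat.mul_le_mul_right _ ih
      _ = (k + 1)! := by rw [factorial_succ, mul_comm]

lemma two_pow_mul_factorial_le {a : ℕ} (ha : 7 ≤ a) : 2 ^ a * a ! ≤ 2 * ((a - 1)!) ^ 2 := by
  obtain ⟨k, rfl⟩ : ∃ k, a = k + 1 := ⟨a - 1, by omega⟩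
  calc 2 ^ (k + 1) * (k + 1)! = 2 * (2 ^ k * (k + 1)) * k ! := by
        rw [factorial_succ]; ring
    _ ≤ 2 * k ! * k ! := Nat.mul_le_mul_right _ (Nat.mul_le_mul_left _
        (two_pow_mul_succ_le_factorial (by omega)))
    _ = 2 * ((k + 1 - 1)!) ^ 2 := by rw [Nat.add_sub_cancel]; ring

lemma factorial_pow_three_mul_six_le {d : ℕ} (hd : 3 ≤ d) :
    (2 * d)! ^ 3 * 6 ≤ 2 * ((3 * d - 1)!) ^ 2 := by
  induction d, hd using Nat.le_induction with
  | base => decide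
  | succ d hd ih =>
    have hx : (2 * (d + 1))! = (2 * d + 2) * (2 * d + 1) * (2 * d)! := by
      rw [show 2 * (d + 1) = 2 * d + 1 + 1 by ring, factorial_succ, factorial_succ]; ring
    have hy : (3 * (d + 1) - 1)! = (3 * d + 2) * (3 * d + 1) * (3 * d) * (3 * d - 1)! := by
      obtain ⟨c, hc⟩ : ∃ c, 3 * d = c + 1 := ⟨3 * d - 1, by omega⟩
      rw [show 3 * (d + 1) - 1 = c + 3 by omega, hc, Nat.add_sub_cancel, factorial_succ,
        factorial_succ, factorial_succ]; ring
    have hstep : ((2 * d + 2) * (2 * d + 1)) ^ 3 ≤ ((3 * d + 2) * (3 * d + 1) * (3 * d)) ^ 2 :=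
      calc ((2 * d + 2) * (2 * d + 1)) ^ 3 ≤ (3 * d) ^ 6 := by
            rw [show 6 = 2 * 3 from rfl, pow_mul]
            exact Nat.pow_le_pow_left (by nlinarith) 3
        _ ≤ ((3 * d + 2) * (3 * d + 1) * (3 * d)) ^ 2 := by
            rw [show 6 = 3 * 2 from rfl, pow_mul]
            exact Nat.pow_le_pow_left (by nlinarith) 2
    calc (2 * (d + 1))! ^ 3 * 6 = ((2 * d + 2) * (2 * d + 1)) ^ 3 * ((2 * d)! ^ 3 * 6) := by
          rw [hx]; ring
      _ ≤ ((3 * d + 2) * (3 * d + 1) * (3 * d)) ^ 2 * (2 * ((3 * d - 1)!) ^ 2) :=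
          Nat.mul_le_mul hstep ih
      _ = 2 * ((3 * (d + 1) - 1)!) ^ 2 := by rw [hy]; ring

lemma four_pow_mul_succ_le_pow {a d : ℕ} (ha : 3 ≤ a) (hd : 3 ≤ d) :
    4 ^ d * (a + 1) ≤ a ^ (2 * d) := by
  induction d, hd using Nat.le_induction with
  | base =>
    have h9 : 9 * a ≤ a ^ 3 := by
      rw [pow_succ]; exact Nat.mul_le_mul_right _ (by nlinarith)
    calc 4 ^ 3 * (a + 1) ≤ 27 * (9 * a) := by omega
      _ ≤ a ^ 3 * a ^ 3 := Nat.mul_le_mul (by simpa using Nat.pow_le_pow_left ha 3) h9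
      _ = a ^ (2 * 3) := by ring
  | succ d hd ih =>
    calc 4 ^ (d + 1) * (a + 1) = 4 * (4 ^ d * (a + 1)) := by ring
      _ ≤ a ^ 2 * a ^ (2 * d) := Nat.mul_le_mul (by nlinarith) ih
      _ = a ^ (2 * (d + 1)) := by ring

lemma factorial_two_mul_mul_succ_le {a d : ℕ} (ha : 3 ≤ a) (hd : 3 ≤ d) :
    (2 * d)! * (a + 1) ≤ (a * d) ^ (2 * d) :=
  calc (2 * d)! * (a + 1) ≤ (2 * d) ^ (2 * d) * (a + 1) :=
        Nat.mul_le_mul_right _ (factorial_le_pow _)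
    _ = d ^ (2 * d) * (4 ^ d * (a + 1)) := by rw [mul_pow, pow_mul]; ring
    _ ≤ d ^ (2 * d) * a ^ (2 * d) := Nat.mul_le_mul_left _ (four_pow_mul_succ_le_pow ha hd)
    _ = (a * d) ^ (2 * d) := by ring

lemma factorial_pow_mul_factorial_le {a d : ℕ} (ha : 3 ≤ a) (hd : 3 ≤ d) :
    (2 * d)! ^ a * a ! ≤ 2 * ((a * d - 1)!) ^ 2 := by
  induction a, ha using Nat.le_induction with
  | base => simpa [factorial] using factorial_pow_three_mul_six_le hd
  | succ a ha ih =>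
    set k := a * d with hk
    have hk1 : k - 1 + 1 = k := by have : 9 ≤ k := Nat.mul_le_mul ha hd; omega
    have hgrow := factorial_mul_pow_le_factorial (m := k - 1) (n := d)
    rw [hk1] at hgrow
    rw [show (a + 1) * d - 1 = k - 1 + d by rw [hk, add_mul]; omega]
    calc (2 * d)! ^ (a + 1) * (a + 1)! = ((2 * d)! ^ a * a !) * ((2 * d)! * (a + 1)) := by
          rw [factorial_succ, pow_succ]; ring
      _ ≤ (2 * ((k - 1)!) ^ 2) * k ^ (2 * d) :=
          Nat.mul_le_mul ih (factorial_two_mul_mul_succ_le ha hd)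
      _ = 2 * ((k - 1)! * k ^ d) ^ 2 := by ring
      _ ≤ 2 * ((k - 1 + d)!) ^ 2 := Nat.mul_le_mul_left _ (Nat.pow_le_pow_left hgrow 2)

lemma mod_two_eq_one_of_forall_dvd_le {n a : ℕ} (hn4 : n % 4 = 2) (ha : a ∣ n) (ha2 : 2 < a)
    (hamin : ∀ b : ℕ, b ∣ n → 2 < b → a ≤ b) : a % 2 = 1 := by
  by_contra heven
  obtain ⟨c, rfl⟩ : ∃ c, a = 2 * c := ⟨a / 2, by omega⟩
  have hc : c ∣ n := (Dvd.intro_left 2 rfl).trans ha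
  by_cases hc2 : c ≤ 2
  · obtain rfl : c = 2 := by omega
    obtain ⟨t, rfl⟩ := ha
    omega
  · have := hamin c hc (by omega)
    omega

lemma mod_four_eq_two_of_mul {a b : ℕ} (h : a * b % 4 = 2) (ha : a % 2 = 1) : b % 4 = 2 := by
  rw [Nat.mul_mod] at h
  rcases (by omega : a % 4 = 1 ∨ a % 4 = 3) with h' | h' <;> rw [h'] at h <;> omega

lemma factorial_div_pow_mul_factorial_le {n a : ℕ} (hn : 10 < n) (hn4 : n % 4 = 2) (ha : a ∣ n)
    (ha2 : 2 < a) (hamin : ∀ b : ℕ, b ∣ n → 2 < b → a ≤ b) :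
    (n / a)! ^ a * a ! ≤ 2 * ((n / 2 - 1)!) ^ 2 := by
  have hodd := mod_two_eq_one_of_forall_dvd_le hn4 ha ha2 hamin
  obtain ⟨b, rfl⟩ := ha
  have hb := mod_four_eq_two_of_mul hn4 hodd
  obtain ⟨d, rfl⟩ : ∃ d, b = 2 * d := ⟨b / 2, by omega⟩
  rw [Nat.mul_div_cancel_left _ (by omega), show a * (2 * d) / 2 = a * d by
    rw [mul_left_comm, Nat.mul_div_cancel_left _ two_pos]]
  rcases (by omega : d = 1 ∨ 3 ≤ d) with rfl | hd
  · have ha7 : 7 ≤ a := by omega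
    simpa using two_pow_mul_factorial_le ha7
  · exact factorial_pow_mul_factorial_le (by omega) hd

lemma mul_pow_succ_le_of_le_sq {c X A B : ℝ} {m : ℕ} (hc : c ≤ 2 ^ m)
    (hX0 : 0 ≤ X) (hXA : X ≤ A ^ 2) (hXB : 4 * X ≤ B ^ 2) :
    c * X ^ (m + 1) ≤ 1 / 2 ^ m * A ^ 2 * B ^ (2 * m) := by
  rw [show 1 / 2 ^ m * A ^ 2 * B ^ (2 * m) = A ^ 2 * (B ^ 2) ^ m / 2 ^ m by ring,
    le_div_iff₀ (by positivity)]
  calc c * X ^ (m + 1) * 2 ^ m ≤ 2 ^ m * X ^ (m + 1) * 2 ^ m := by gcongr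
    _ = X * (4 * X) ^ m := by rw [mul_pow, show (4 : ℝ) = 2 ^ 2 by norm_num, ← pow_mul]; ring
    _ ≤ A ^ 2 * (B ^ 2) ^ m := by gcongr

/-- **Lemma 13 (2).** For `m ≥ 2`, `n > 10` with `n ≡ 2 (mod 4)`, and `a` the
smallest divisor of `n` greater than `2`,
`(1 + α(m))·(((n/a)!)^a·a!/2)^m ≤ (1/2^(m-1))·((n/2-1)!)²·((n/2)!)^(2m-2)` (over the reals). -/
theorem imprimitive_bound_two_mod_four (m : ℕ) (hm : 2 ≤ m) (n : ℕ) (hn : 10 < n)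
    (hn4 : n % 4 = 2)
    (a : ℕ) (ha : a ∣ n) (ha2 : 2 < a) (hamin : ∀ b : ℕ, b ∣ n → 2 < b → a ≤ b) :
    (1 + (alpha m : ℝ)) * (((Nat.factorial (n / a) : ℝ) ^ a * Nat.factorial a) / 2) ^ m ≤
      (1 / (2 : ℝ) ^ (m - 1)) * (Nat.factorial (n / 2 - 1) : ℝ) ^ 2 *
        (Nat.factorial (n / 2) : ℝ) ^ (2 * m - 2) := by
  obtain ⟨j, rfl⟩ : ∃ j, m = j + 1 := ⟨m - 1, by omega⟩
  rw [Nat.add_sub_cancel, show 2 * (j + 1) - 2 = 2 * j by omega]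
  have hcore : ((n / a)! ^ a * a ! : ℝ) ≤ 2 * ((n / 2 - 1)! : ℝ) ^ 2 := by
    exact_mod_cast factorial_div_pow_mul_factorial_le hn hn4 ha ha2 hamin
  have hα : (1 + alpha (j + 1) : ℝ) ≤ 2 ^ j := by
    exact_mod_cast one_add_alpha_le_two_pow (Nat.le_add_left 1 j)
  have hhalf : ((n / 2)! : ℝ) = (n / 2 : ℕ) * (n / 2 - 1)! := by
    rw [← Nat.mul_factorial_pred (by omega)]; push_cast; rfl
  have h4 : (4 : ℝ) ≤ (n / 2 : ℕ) ^ 2 := by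
    have h2 : (2 : ℝ) ≤ (n / 2 : ℕ) := by exact_mod_cast (by omega : 2 ≤ n / 2)
    nlinarith
  refine mul_pow_succ_le_of_le_sq hα (by positivity) (by linarith) ?_
  rw [hhalf, mul_pow]
  nlinarith [mul_le_mul_of_nonneg_right h4 (sq_nonneg ((n / 2 - 1)! : ℝ))]
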